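/- arXiv:2202.10491 — 8 statements merged into one kernel-verified Lean document; each statement's English description precedes it below -/
import Mathlib

section
/- Let R be a ring. For elements a_x,b_x,c_x,d_x (entries of a 2×2 matrix L(x)) associated to each of x,y,z,u,v,w, the three 4×4 matrix equations L⁴_{12}(u)L⁴_{13}(v)L⁴_{23}(w) = L⁴_{23}(z)L⁴_{13}(y)L⁴_{12}(x), L⁴_{12}(u)L⁴_{14}(v)L⁴_{24}(w) = L⁴_{24}(z)L⁴_{14}(y)L⁴_{12}(x), and L⁴_{23}(u)L⁴_{24}(v)L⁴_{34}(w) = L⁴_{34}(z)L⁴_{24}(y)L⁴_{23}(x) are pairwise equivalent: each one holds if and only if any other one holds. -/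
/-- The 4×4 matrix over `R` equal to the identity except that its
`(i,i), (i,j), (j,i), (j,j)` entries are `a, b, c, d` respectively:
the embedding of the 2×2 matrix `[[a,b],[c,d]]` at rows/columns `i,j`. -/
def L4 {R : Type*} [Ring R] (i j : Fin 4) (a b c d : R) : Matrix (Fin 4) (Fin 4) R :=
  Matrix.of fun p q =>
    if p = i ∧ q = i then a
    else if p = i ∧ q = j then b
    else if p = j ∧ q = i then c
    else if p = j ∧ q = j then d
    else if p = q then 1 else 0

/-- Reindexing by a permutation sends the embedding at `(i,j)` to the
embedding at `(σ i, σ j)`. -/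
lemma L4_reindex {R : Type*} [Ring R] (σ : Fin 4 ≃ Fin 4) (i j : Fin 4) (a b c d : R) :
    Matrix.reindex σ σ (L4 i j a b c d) = L4 (σ i) (σ j) a b c d := by
  ext p q
  simp only [Matrix.reindex_apply, Matrix.submatrix_apply, L4, Matrix.of_apply,
    Equiv.symm_apply_eq, EmbeddingLike.apply_eq_iff_eq]

/-- Reindexing a square matrix by the same equivalence on rows and columns
is multiplicative. -/
lemma reindex_mul {R : Type*} [Ring R] (σ : Fin 4 ≃ Fin 4) (A B : Matrix (Fin 4) (Fin 4) R) :
    Matrix.reindex σ σ (A * B) = Matrix.reindex σ σ A * Matrix.reindex σ σ B := by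
  simp only [Matrix.reindex_apply]
  exact (Matrix.submatrix_mul_equiv A B σ.symm σ.symm σ.symm).symm

/-- The trifactorisation equation is invariant under permuting the four indices. -/
lemma trifactorisation_perm {R : Type*} [Ring R] (σ : Fin 4 ≃ Fin 4) (i1 j1 i2 j2 i3 j3 : Fin 4)
    (ua ub uc ud va vb vc vd wa wb wc wd xa xb xc xd ya yb yc yd za zb zc zd : R) :
    (L4 i1 j1 ua ub uc ud * L4 i2 j2 va vb vc vd * L4 i3 j3 wa wb wc wd
        = L4 i3 j3 za zb zc zd * L4 i2 j2 ya yb yc yd * L4 i1 j1 xa xb xc xd) ↔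
    (L4 (σ i1) (σ j1) ua ub uc ud * L4 (σ i2) (σ j2) va vb vc vd * L4 (σ i3) (σ j3) wa wb wc wd
        = L4 (σ i3) (σ j3) za zb zc zd * L4 (σ i2) (σ j2) ya yb yc yd * L4 (σ i1) (σ j1) xa xb xc xd) := by
  rw [← (Matrix.reindex σ σ).injective.eq_iff, reindex_mul, reindex_mul, reindex_mul, reindex_mul,
    L4_reindex, L4_reindex, L4_reindex, L4_reindex, L4_reindex, L4_reindex]

/-- The three 4×4 trifactorisation equations, at index triples `(1,2,3)`,
`(1,2,4)` and `(2,3,4)`, are pairwise equivalent. -/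
theorem trifactorisation_equations_equiv {R : Type*} [Ring R]
    (ua ub uc ud va vb vc vd wa wb wc wd
     xa xb xc xd ya yb yc yd za zb zc zd : R) :
    ((L4 0 1 ua ub uc ud * L4 0 2 va vb vc vd * L4 1 2 wa wb wc wd
        = L4 1 2 za zb zc zd * L4 0 2 ya yb yc yd * L4 0 1 xa xb xc xd) ↔
     (L4 0 1 ua ub uc ud * L4 0 3 va vb vc vd * L4 1 3 wa wb wc wd
        = L4 1 3 za zb zc zd * L4 0 3 ya yb yc yd * L4 0 1 xa xb xc xd)) ∧
    ((L4 0 1 ua ub uc ud * L4 0 3 va vb vc vd * L4 1 3 wa wb wc wd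
        = L4 1 3 za zb zc zd * L4 0 3 ya yb yc yd * L4 0 1 xa xb xc xd) ↔
     (L4 1 2 ua ub uc ud * L4 1 3 va vb vc vd * L4 2 3 wa wb wc wd
        = L4 2 3 za zb zc zd * L4 1 3 ya yb yc yd * L4 1 2 xa xb xc xd)) := by
  refine ⟨?_, ?_⟩
  · have h := trifactorisation_perm (Equiv.swap (2 : Fin 4) 3) 0 1 0 2 1 2
      ua ub uc ud va vb vc vd wa wb wc wd xa xb xc xd ya yb yc yd za zb zc zd
    norm_num [Equiv.swap_apply_of_ne_of_ne] at h
    exact h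
  · have h := trifactorisation_perm
      (⟨![1,2,0,3], ![2,0,1,3], by decide, by decide⟩ : Fin 4 ≃ Fin 4) 0 1 0 3 1 3
      ua ub uc ud va vb vc vd wa wb wc wd xa xb xc xd ya yb yc yd za zb zc zd
    norm_num at h
    exact h
end

section
/- Let R be a division ring and let x₁,x₂,y₁,y₂,z₁,z₂ ∈ R with x₁,y₁,z₁ invertible. Define u₁ = z₁⁻¹·x₁·y₁, u₂ = z₁⁻¹·x₂·y₁, v₁ = z₁, v₂ = (z₂·z₁⁻¹·x₂ + y₂·y₁⁻¹)·x₁⁻¹·z₁, w₁ = z₁, w₂ = z₂. Then V³_{12}(u₁,u₂)·V³_{13}(v₁,v₂)·V³_{23}(w₁,w₂) = V³_{23}(z₁,z₂)·V³_{13}(y₁,y₂)·V³_{12}(x₁,x₂), where V(x₁,x₂) = [[x₁⁻¹,0],[x₂·x₁⁻¹,1]]. -/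
/-- The mKdV gauge-transformation map satisfies the local Yang–Baxter equation
for `V(x₁,x₂) = [[x₁⁻¹,0],[x₂x₁⁻¹,1]]`. -/
theorem mKdV_gauge_local_yang_baxter {R : Type*} [DivisionRing R]
    (x₁ x₂ y₁ y₂ z₁ z₂ u₁ u₂ v₁ v₂ w₁ w₂ : R)
    (hx₁ : x₁ ≠ 0) (hy₁ : y₁ ≠ 0) (hz₁ : z₁ ≠ 0)
    (hu₁ : u₁ = z₁⁻¹ * x₁ * y₁)
    (hu₂ : u₂ = z₁⁻¹ * x₂ * y₁)
    (hv₁ : v₁ = z₁)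
    (hv₂ : v₂ = (z₂ * z₁⁻¹ * x₂ + y₂ * y₁⁻¹) * x₁⁻¹ * z₁)
    (hw₁ : w₁ = z₁)
    (hw₂ : w₂ = z₂) :
    (!![u₁⁻¹, 0, 0; u₂ * u₁⁻¹, 1, 0; 0, 0, 1] *
     !![v₁⁻¹, 0, 0; 0, 1, 0; v₂ * v₁⁻¹, 0, 1] *
     !![1, 0, 0; 0, w₁⁻¹, 0; 0, w₂ * w₁⁻¹, 1] : Matrix (Fin 3) (Fin 3) R)
    = !![1, 0, 0; 0, z₁⁻¹, 0; 0, z₂ * z₁⁻¹, 1] *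
      !![y₁⁻¹, 0, 0; 0, 1, 0; y₂ * y₁⁻¹, 0, 1] *
      !![x₁⁻¹, 0, 0; x₂ * x₁⁻¹, 1, 0; 0, 0, 1] := by
  subst hu₁ hu₂ hv₁ hv₂ hw₁ hw₂
  ext i j
  fin_cases i <;> fin_cases j <;>
    simp [Matrix.mul_apply, Fin.sum_univ_succ, mul_inv_rev, mul_assoc,
      inv_mul_cancel₀, mul_inv_cancel₀, hx₁, hy₁, hz₁, add_mul, add_comm]
end

section
/- Let R be a division ring and a,b,c nonzero central elements, and suppose x₁,y₁,z₁ are central invertible elements of R and x₂,y₂,z₂ ∈ R are invertible, with az₁x₂⁻¹ + bz₂y₂⁻¹x₁ invertible. Then for the NLS-type map with u₁=y₁, u₂ = ax₁(az₁x₂⁻¹ + bz₂y₂⁻¹x₁)⁻¹, v₁=x₁, v₂ = a⁻¹bc⁻¹x₂z₂, w₂ = a⁻¹(az₁x₂⁻¹+bz₂y₂⁻¹x₁)x₁⁻¹y₂, the expression for w₁ simplifies: a⁻¹(az₁x₂⁻¹ + bz₂y₂⁻¹x₁)x₁⁻¹[y₁x₂ − by₁x₁(az₁x₂⁻¹ +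 bz₂y₂⁻¹x₁)⁻¹z₂y₂⁻¹x₂] = x₁⁻¹y₁z₁. -/
/-- Under the centrality assumption on `x₁, y₁, z₁`, the expression for `w₁`
in the noncommutative NLS tetrahedron map simplifies to `x₁⁻¹ y₁ z₁`. -/
theorem NLS_w1_simplifies {R : Type*} [DivisionRing R]
    (a b c x₁ y₁ z₁ : R)
    (ha : a ∈ Set.center R) (hb : b ∈ Set.center R) (hc : c ∈ Set.center R)
    (hx₁c : x₁ ∈ Set.center R) (hy₁c : y₁ ∈ Set.center R) (hz₁c : z₁ ∈ Set.center R)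
    (ha0 : a ≠ 0) (hb0 : b ≠ 0) (hc0 : c ≠ 0)
    (hx₁ : x₁ ≠ 0) (hy₁ : y₁ ≠ 0) (hz₁ : z₁ ≠ 0)
    (x₂ y₂ z₂ : R)
    (hx₂ : x₂ ≠ 0) (hy₂ : y₂ ≠ 0) (hz₂ : z₂ ≠ 0)
    (hS : a * z₁ * x₂⁻¹ + b * z₂ * y₂⁻¹ * x₁ ≠ 0) :
    a⁻¹ * (a * z₁ * x₂⁻¹ + b * z₂ * y₂⁻¹ * x₁) * x₁⁻¹ *
      (y₁ * x₂ - b * y₁ * x₁ * (a * z₁ * x₂⁻¹ + b * z₂ * y₂⁻¹ * x₁)⁻¹ * z₂ * y₂⁻¹ * x₂)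
    = x₁⁻¹ * y₁ * z₁ := by
  set S := a * z₁ * x₂⁻¹ + b * z₂ * y₂⁻¹ * x₁ with hSdef
  have hca : ∀ g : R, g * a = a * g := Semigroup.mem_center_iff.mp ha
  have hcb : ∀ g : R, g * b = b * g := Semigroup.mem_center_iff.mp hb
  have hcx : ∀ g : R, g * x₁ = x₁ * g := Semigroup.mem_center_iff.mp hx₁c
  have hcy : ∀ g : R, g * y₁ = y₁ * g := Semigroup.mem_center_iff.mp hy₁c
  have hcz : ∀ g : R, g * z₁ = z₁ * g := Semigroup.mem_center_iff.mp hz₁c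
  have hca' : ∀ g : R, g * a⁻¹ = a⁻¹ * g := fun g => by
    have h : Commute g a := hca g
    exact h.inv_right₀
  have hcx' : ∀ g : R, g * x₁⁻¹ = x₁⁻¹ * g := fun g => by
    have h : Commute g x₁ := hcx g
    exact h.inv_right₀
  -- move-to-front lemmas
  have ma : ∀ g h : R, g * (a * h) = a * (g * h) := fun g h => by
    rw [← mul_assoc, hca, mul_assoc]
  have ma' : ∀ g h : R, g * (a⁻¹ * h) = a⁻¹ * (g * h) := fun g h => by
    rw [← mul_assoc, hca', mul_assoc]
  have mb : ∀ g h : R, g * (b * h) = b * (g * h) := fun g h => by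
    rw [← mul_assoc, hcb, mul_assoc]
  have mx : ∀ g h : R, g * (x₁ * h) = x₁ * (g * h) := fun g h => by
    rw [← mul_assoc, hcx, mul_assoc]
  have mx' : ∀ g h : R, g * (x₁⁻¹ * h) = x₁⁻¹ * (g * h) := fun g h => by
    rw [← mul_assoc, hcx', mul_assoc]
  have my : ∀ g h : R, g * (y₁ * h) = y₁ * (g * h) := fun g h => by
    rw [← mul_assoc, hcy, mul_assoc]
  have mz : ∀ g h : R, g * (z₁ * h) = z₁ * (g * h) := fun g h => by
    rw [← mul_assoc, hcz, mul_assoc]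
  -- cancellation lemmas
  have c1 : x₂⁻¹ * x₂ = 1 := inv_mul_cancel₀ hx₂
  have c2 : ∀ g : R, x₂⁻¹ * (x₂ * g) = g := fun g => inv_mul_cancel_left₀ hx₂ g
  have c3 : S * S⁻¹ = 1 := mul_inv_cancel₀ hS
  have c4 : ∀ g : R, S * (S⁻¹ * g) = g := fun g => mul_inv_cancel_left₀ hS g
  have c5 : x₁⁻¹ * x₁ = 1 := inv_mul_cancel₀ hx₁
  have c6 : ∀ g : R, x₁⁻¹ * (x₁ * g) = g := fun g => inv_mul_cancel_left₀ hx₁ g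
  have c7 : x₁ * x₁⁻¹ = 1 := mul_inv_cancel₀ hx₁
  have c8 : ∀ g : R, x₁ * (x₁⁻¹ * g) = g := fun g => mul_inv_cancel_left₀ hx₁ g
  have c9 : a⁻¹ * a = 1 := inv_mul_cancel₀ ha0
  have c10 : ∀ g : R, a⁻¹ * (a * g) = g := fun g => inv_mul_cancel_left₀ ha0 g
  have c11 : a * a⁻¹ = 1 := mul_inv_cancel₀ ha0
  have c12 : ∀ g : R, a * (a⁻¹ * g) = g := fun g => mul_inv_cancel_left₀ ha0 g
  have hby : ∀ g : R, g * (b * y₁ * x₁) = b * y₁ * x₁ * g := fun g => by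
    have h1 : Commute g b := hcb g
    have h2 : Commute g y₁ := hcy g
    have h3 : Commute g x₁ := hcx g
    exact ((h1.mul_right h2).mul_right h3).eq
  have key : y₁ * x₂ - b * y₁ * x₁ * S⁻¹ * z₂ * y₂⁻¹ * x₂ = y₁ * z₁ * a * S⁻¹ := by
    apply mul_left_cancel₀ hS
    have hc1 : b * y₁ * x₁ * S⁻¹ = S⁻¹ * (b * y₁ * x₁) := (hby S⁻¹).symm
    rw [mul_sub, hc1]
    simp only [mul_assoc]
    simp only [c4]
    try simp only [ma', hca', c1, c2, c3, c4, c5, c6, c7, c8, c9, c10, c11, c12, mul_one, one_mul]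
    try simp only [mx', hcx', c1, c2, c3, c4, c5, c6, c7, c8, c9, c10, c11, c12, mul_one, one_mul]
    try simp only [mz, hcz, c1, c2, c3, c4, c5, c6, c7, c8, c9, c10, c11, c12, mul_one, one_mul]
    try simp only [ma, hca, c1, c2, c3, c4, c5, c6, c7, c8, c9, c10, c11, c12, mul_one, one_mul]
    try simp only [mb, hcb, c1, c2, c3, c4, c5, c6, c7, c8, c9, c10, c11, c12, mul_one, one_mul]
    try simp only [mx, hcx, c1, c2, c3, c4, c5, c6, c7, c8, c9, c10, c11, c12, mul_one, one_mul]
    try simp only [my, hcy, c1, c2, c3, c4, c5, c6, c7, c8, c9, c10, c11, c12, mul_one, one_mul]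
    rw [hSdef]
    simp only [add_mul, mul_add, mul_assoc, c1, c2, mul_one]
    try simp only [ma', hca', c1, c2, c3, c4, c5, c6, c7, c8, c9, c10, c11, c12, mul_one, one_mul]
    try simp only [mx', hcx', c1, c2, c3, c4, c5, c6, c7, c8, c9, c10, c11, c12, mul_one, one_mul]
    try simp only [mz, hcz, c1, c2, c3, c4, c5, c6, c7, c8, c9, c10, c11, c12, mul_one, one_mul]
    try simp only [ma, hca, c1, c2, c3, c4, c5, c6, c7, c8, c9, c10, c11, c12, mul_one, one_mul]
    try simp only [mb, hcb, c1, c2, c3, c4, c5, c6, c7, c8, c9, c10, c11, c12, mul_one, one_mul]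
    try simp only [mx, hcx, c1, c2, c3, c4, c5, c6, c7, c8, c9, c10, c11, c12, mul_one, one_mul]
    try simp only [my, hcy, c1, c2, c3, c4, c5, c6, c7, c8, c9, c10, c11, c12, mul_one, one_mul]
    abel
  rw [key]
  simp only [mul_assoc]
  try simp only [ma', hca', c1, c2, c3, c4, c5, c6, c7, c8, c9, c10, c11, c12, mul_one, one_mul]
  try simp only [mx', hcx', c1, c2, c3, c4, c5, c6, c7, c8, c9, c10, c11, c12, mul_one, one_mul]
  try simp only [mz, hcz, c1, c2, c3, c4, c5, c6, c7, c8, c9, c10, c11, c12, mul_one, one_mul]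
  try simp only [ma, hca, c1, c2, c3, c4, c5, c6, c7, c8, c9, c10, c11, c12, mul_one, one_mul]
  try simp only [mb, hcb, c1, c2, c3, c4, c5, c6, c7, c8, c9, c10, c11, c12, mul_one, one_mul]
  try simp only [mx, hcx, c1, c2, c3, c4, c5, c6, c7, c8, c9, c10, c11, c12, mul_one, one_mul]
  try simp only [my, hcy, c1, c2, c3, c4, c5, c6, c7, c8, c9, c10, c11, c12, mul_one, one_mul]
end

section
/- Let R be a division ring and k a nonzero central element. Let x,y,z ∈ R be invertible with x⁻¹ + z·y⁻¹ invertible. Define u = (x⁻¹ + z·y⁻¹)⁻¹, v = k⁻¹·x·z, w = x⁻¹·y + z. Then the noncommutative Sergeev map (x,y,z) ↦ (u,v,w) satisfies the Lax representation L³_{12}(u;k)·L³_{13}(v;k)·L³_{23}(w;k) = L³_{23}(z;k)·L³_{13}(y;k)·L³_{12}(x;k), where L(x;k) = [[1, x],[k·x⁻¹, 0]]. -/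
/-- The noncommutative Sergeev map satisfies the Lax representation
(local Yang–Baxter equation) for `L(x;k) = [[1,x],[k·x⁻¹,0]]`. -/
theorem sergeev_lax_representation {R : Type*} [DivisionRing R]
    (k : R) (hk : k ∈ Set.center R) (hk0 : k ≠ 0)
    (x y z : R) (hx : x ≠ 0) (hy : y ≠ 0) (hz : z ≠ 0)
    (hS : x⁻¹ + z * y⁻¹ ≠ 0) :
    (!![1, (x⁻¹ + z * y⁻¹)⁻¹, 0; k * ((x⁻¹ + z * y⁻¹)⁻¹)⁻¹, 0, 0; 0, 0, 1] *
     !![1, 0, k⁻¹ * x * z; 0, 1, 0; k * (k⁻¹ * x * z)⁻¹, 0, 0] *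
     !![1, 0, 0; 0, 1, x⁻¹ * y + z; 0, k * (x⁻¹ * y + z)⁻¹, 0] : Matrix (Fin 3) (Fin 3) R)
    = !![1, 0, 0; 0, 1, z; 0, k * z⁻¹, 0] *
      !![1, 0, y; 0, 1, 0; k * y⁻¹, 0, 0] *
      !![1, x, 0; k * x⁻¹, 0, 0; 0, 0, 1] := by

  have hkc : ∀ a : R, k * a = a * k := fun a => (Set.mem_center_iff.mp hk).comm a
  have m1 : ∀ a b : R, a * (k * b) = k * (a * b) := fun a b => by
    rw [← mul_assoc, ← hkc, mul_assoc]
  have m3 : ∀ a : R, a * k = k * a := fun a => (hkc a).symm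
  have hkinv : ∀ a : R, k⁻¹ * a = a * k⁻¹ := fun a => Commute.inv_left₀ (hkc a)
  have m2 : ∀ a b : R, a * (k⁻¹ * b) = k⁻¹ * (a * b) := fun a b => by
    rw [← mul_assoc, ← hkinv, mul_assoc]
  have m5 : ∀ b : R, k⁻¹ * (k * b) = b := fun b => by
    rw [← mul_assoc, inv_mul_cancel₀ hk0, one_mul]
  have hSy : x⁻¹ * y + z = (x⁻¹ + z * y⁻¹) * y := by
    rw [add_mul, mul_assoc, inv_mul_cancel₀ hy, mul_one]
  have hw0 : x⁻¹ * y + z ≠ 0 := by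
    rw [hSy]; exact mul_ne_zero hS hy
  have hv0 : k⁻¹ * x * z ≠ 0 :=
    mul_ne_zero (mul_ne_zero (inv_ne_zero hk0) hx) hz
  have hkey : (x⁻¹ + z * y⁻¹) * (x * (z * y⁻¹)) = z * y⁻¹ * x * (x⁻¹ + z * y⁻¹) := by
    rw [add_mul, mul_add, ← mul_assoc x⁻¹ x, inv_mul_cancel₀ hx, one_mul,
      mul_assoc (z * y⁻¹) x x⁻¹, mul_inv_cancel₀ hx, mul_one,
      mul_assoc (z * y⁻¹) x (z * y⁻¹)]
  ext i j
  fin_cases i <;> fin_cases j <;>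
    simp [Matrix.mul_apply, Fin.sum_univ_succ, inv_inv, hSy, mul_inv_rev]
  · -- entry (0,1)
    rw [mul_assoc k⁻¹ x z, mul_assoc k⁻¹ (x * z), m1, m5, mul_assoc x z]
    nth_rewrite 1 [show (x⁻¹ + z * y⁻¹)⁻¹ = x * (x⁻¹ * (x⁻¹ + z * y⁻¹)⁻¹) by
      rw [← mul_assoc, mul_inv_cancel₀ hx, one_mul]]
    rw [← mul_add, show z * (y⁻¹ * (x⁻¹ + z * y⁻¹)⁻¹) = z * y⁻¹ * (x⁻¹ + z * y⁻¹)⁻¹ from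
      (mul_assoc z _ _).symm, ← add_mul, mul_inv_cancel₀ hS, mul_one]
  · -- entry (0,2)
    rw [← mul_assoc, inv_mul_cancel₀ hS, one_mul]
  · -- entry (1,0)
    rw [m1 z y⁻¹, mul_add, add_comm]
  · -- entry (1,1)
    rw [mul_assoc k⁻¹ x z, m2, mul_assoc k⁻¹, m1 _ (y⁻¹ * (x⁻¹ + z * y⁻¹)⁻¹), m5,
      mul_assoc k (x⁻¹ + z * y⁻¹) (x * z), mul_assoc k _ (y⁻¹ * (x⁻¹ + z * y⁻¹)⁻¹),
      mul_assoc (x⁻¹ + z * y⁻¹) (x * z),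
      show x * z * (y⁻¹ * (x⁻¹ + z * y⁻¹)⁻¹) = x * (z * y⁻¹) * (x⁻¹ + z * y⁻¹)⁻¹ by
        rw [mul_assoc x z, ← mul_assoc z, ← mul_assoc x],
      show (x⁻¹ + z * y⁻¹) * (x * (z * y⁻¹) * (x⁻¹ + z * y⁻¹)⁻¹)
          = (x⁻¹ + z * y⁻¹) * (x * (z * y⁻¹)) * (x⁻¹ + z * y⁻¹)⁻¹ from
        (mul_assoc _ _ _).symm,
      hkey, mul_assoc (z * y⁻¹ * x), mul_inv_cancel₀ hS, mul_one, m1 z y⁻¹,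
      mul_assoc k (z * y⁻¹) x, mul_assoc z y⁻¹ x]
  · -- entry (2,0)
    rw [m3 x⁻¹, m1 z⁻¹ x⁻¹, mul_assoc k z⁻¹, m1 z⁻¹]
end

section
/- Let R be a division ring with nonzero central element k. Suppose x,y,z,r,s,t and x̂,ŷ,ẑ,r̂,ŝ,t̂ are invertible elements of R satisfying the system: x̂⁻¹ + ẑŷ⁻¹ + ŝr̂⁻¹ = x⁻¹ + zy⁻¹ + sr⁻¹; (ẑŷ⁻¹ + ŝr̂⁻¹)x̂ = (zy⁻¹ + sr⁻¹)x; ŝr̂⁻¹ŷ = sr⁻¹y; t̂ŝ⁻¹ẑŷ⁻¹x̂ = ts⁻¹zy⁻¹x; t̂⁻¹ẑ⁻¹x̂⁻¹ = t⁻¹z⁻¹x⁻¹; ẑ⁻¹x̂⁻¹ + t̂ŝ⁻¹x̂⁻¹ + t̂ŝ⁻¹ẑŷ⁻¹ = z⁻¹x⁻¹ + ts⁻¹x⁻¹ + ts⁻¹zy⁻¹; together with x̂ = x, ŷ = y, r̂ = r. Then ŝ = s, ẑ = z, and t̂ = t. -/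
/-- The six-factorisation system for the Sergeev Lax matrix has only the
trivial solution. -/
theorem sergeev_six_factorisation_trivial {R : Type*} [DivisionRing R]
    (k : R) (hk : k ∈ Set.center R) (hk0 : k ≠ 0)
    (x y z r s t x' y' z' r' s' t' : R)
    (hx : x ≠ 0) (hy : y ≠ 0) (hz : z ≠ 0) (hr : r ≠ 0) (hs : s ≠ 0) (ht : t ≠ 0)
    (hx' : x' ≠ 0) (hy' : y' ≠ 0) (hz' : z' ≠ 0) (hr' : r' ≠ 0) (hs' : s' ≠ 0)
    (ht' : t' ≠ 0)
    (e1 : x'⁻¹ + z' * y'⁻¹ + s' * r'⁻¹ = x⁻¹ + z * y⁻¹ + s * r⁻¹)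
    (e2 : (z' * y'⁻¹ + s' * r'⁻¹) * x' = (z * y⁻¹ + s * r⁻¹) * x)
    (e3 : s' * r'⁻¹ * y' = s * r⁻¹ * y)
    (e4 : t' * s'⁻¹ * z' * y'⁻¹ * x' = t * s⁻¹ * z * y⁻¹ * x)
    (e5 : t'⁻¹ * z'⁻¹ * x'⁻¹ = t⁻¹ * z⁻¹ * x⁻¹)
    (e6 : z'⁻¹ * x'⁻¹ + t' * s'⁻¹ * x'⁻¹ + t' * s'⁻¹ * z' * y'⁻¹
        = z⁻¹ * x⁻¹ + t * s⁻¹ * x⁻¹ + t * s⁻¹ * z * y⁻¹)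
    (hxx : x' = x) (hyy : y' = y) (hrr : r' = r) :
    s' = s ∧ z' = z ∧ t' = t := by
  subst hxx; subst hyy; subst hrr
  have hs2 : s' = s :=
    mul_right_cancel₀ (inv_ne_zero hr') (mul_right_cancel₀ hy' e3)
  subst hs2
  have hz2 : z' = z := by
    have h1 : z' * y'⁻¹ = z * y'⁻¹ := add_left_cancel (add_right_cancel e1)
    exact mul_right_cancel₀ (inv_ne_zero hy') h1
  subst hz2
  exact ⟨rfl, rfl, inv_injective (mul_right_cancel₀ (inv_ne_zero hz')
    (mul_right_cancel₀ (inv_ne_zero hx') e5))⟩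
end

section
/- Let R be a division ring. Suppose x,y,z,r,s,t and x̂,ŷ,ẑ,r̂,ŝ,t̂ are elements of R (invertible where required) such that the six-factorisation identity L⁴_{34}(t̂)L⁴_{24}(ŝ)L⁴_{14}(r̂)L⁴_{23}(ẑ)L⁴_{13}(ŷ)L⁴_{12}(x̂) = L⁴_{34}(t)L⁴_{24}(s)L⁴_{14}(r)L⁴_{23}(z)L⁴_{13}(y)L⁴_{12}(x) holds for the Hirota Lax matrix L(x) = [[x,1],[1,0]]. Then x̂ = x, ŷ = y, ẑ = z, r̂ = r, ŝ = s, t̂ = t. -/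
/-- The 4×4 embedding of the Hirota Lax matrix `L(x) = [[x,1],[1,0]]`:
the identity matrix with the block `[[x,1],[1,0]]` placed at rows/columns `i,j`. -/
def hirotaL4 {R : Type*} [DivisionRing R] (i j : Fin 4) (x : R) :
    Matrix (Fin 4) (Fin 4) R :=
  Matrix.of fun p q =>
    if p = i ∧ q = i then x
    else if p = i ∧ q = j then 1
    else if p = j ∧ q = i then 1
    else if p = j ∧ q = j then 0
    else if p = q then 1 else 0

set_option maxHeartbeats 1000000 in
lemma hirota_prod {R : Type*} [DivisionRing R] (x y z r s t : R) :
    hirotaL4 2 3 t * hirotaL4 1 3 s * hirotaL4 0 3 r *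
      hirotaL4 1 2 z * hirotaL4 0 2 y * hirotaL4 0 1 x
    = !![r*(y*x), r*y, r, 1;
         y*x + s*x + s*z, y + s, 1, 0;
         x + z + t, 1, 0, 0;
         1, 0, 0, 0] := by
  have e1 : (hirotaL4 2 3 t : Matrix (Fin 4) (Fin 4) R)
      = !![1,0,0,0; 0,1,0,0; 0,0,t,1; 0,0,1,0] := by
    ext p q; fin_cases p <;> fin_cases q <;> rfl
  have e2 : (hirotaL4 1 3 s : Matrix (Fin 4) (Fin 4) R)
      = !![1,0,0,0; 0,s,0,1; 0,0,1,0; 0,1,0,0] := by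
    ext p q; fin_cases p <;> fin_cases q <;> rfl
  have e3 : (hirotaL4 0 3 r : Matrix (Fin 4) (Fin 4) R)
      = !![r,0,0,1; 0,1,0,0; 0,0,1,0; 1,0,0,0] := by
    ext p q; fin_cases p <;> fin_cases q <;> rfl
  have e4 : (hirotaL4 1 2 z : Matrix (Fin 4) (Fin 4) R)
      = !![1,0,0,0; 0,z,1,0; 0,1,0,0; 0,0,0,1] := by
    ext p q; fin_cases p <;> fin_cases q <;> rfl
  have e5 : (hirotaL4 0 2 y : Matrix (Fin 4) (Fin 4) R)
      = !![y,0,1,0; 0,1,0,0; 1,0,0,0; 0,0,0,1] := by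
    ext p q; fin_cases p <;> fin_cases q <;> rfl
  have e6 : (hirotaL4 0 1 x : Matrix (Fin 4) (Fin 4) R)
      = !![x,1,0,0; 1,0,0,0; 0,0,1,0; 0,0,0,1] := by
    ext p q; fin_cases p <;> fin_cases q <;> rfl
  rw [e1,e2,e3,e4,e5,e6]
  have p2 : (!![1,0,0,0; 0,1,0,0; 0,0,t,1; 0,0,1,0] : Matrix (Fin 4) (Fin 4) R)
      * !![1,0,0,0; 0,s,0,1; 0,0,1,0; 0,1,0,0]
      = !![1,0,0,0; 0,s,0,1; 0,1,t,0; 0,0,1,0] := by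
    ext p q; fin_cases p <;> fin_cases q <;>
      simp [Matrix.mul_apply, Fin.sum_univ_four, Matrix.vecHead, Matrix.vecTail]
  have p3 : (!![1,0,0,0; 0,s,0,1; 0,1,t,0; 0,0,1,0] : Matrix (Fin 4) (Fin 4) R)
      * !![r,0,0,1; 0,1,0,0; 0,0,1,0; 1,0,0,0]
      = !![r,0,0,1; 1,s,0,0; 0,1,t,0; 0,0,1,0] := by
    ext p q; fin_cases p <;> fin_cases q <;>
      simp [Matrix.mul_apply, Fin.sum_univ_four, Matrix.vecHead, Matrix.vecTail]
  have p4 : (!![r,0,0,1; 1,s,0,0; 0,1,t,0; 0,0,1,0] : Matrix (Fin 4) (Fin 4) R)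
      * !![1,0,0,0; 0,z,1,0; 0,1,0,0; 0,0,0,1]
      = !![r,0,0,1; 1,s*z,s,0; 0,z+t,1,0; 0,1,0,0] := by
    ext p q; fin_cases p <;> fin_cases q <;>
      simp [Matrix.mul_apply, Fin.sum_univ_four, Matrix.vecHead, Matrix.vecTail]
  have p5 : (!![r,0,0,1; 1,s*z,s,0; 0,z+t,1,0; 0,1,0,0] : Matrix (Fin 4) (Fin 4) R)
      * !![y,0,1,0; 0,1,0,0; 1,0,0,0; 0,0,0,1]
      = !![r*y,0,r,1; y+s,s*z,1,0; 1,z+t,0,0; 0,1,0,0] := by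
    ext p q; fin_cases p <;> fin_cases q <;>
      simp [Matrix.mul_apply, Fin.sum_univ_four, Matrix.vecHead, Matrix.vecTail]
  have p6 : (!![r*y,0,r,1; y+s,s*z,1,0; 1,z+t,0,0; 0,1,0,0] : Matrix (Fin 4) (Fin 4) R)
      * !![x,1,0,0; 1,0,0,0; 0,0,1,0; 0,0,0,1]
      = !![r*(y*x), r*y, r, 1;
           y*x + s*x + s*z, y + s, 1, 0;
           x + z + t, 1, 0, 0;
           1, 0, 0, 0] := by
    ext p q; fin_cases p <;> fin_cases q <;>
      simp [Matrix.mul_apply, Fin.sum_univ_four, Matrix.vecHead, Matrix.vecTail, mul_assoc, add_mul, add_assoc]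
  rw [p2, p3, p4, p5, p6]

/-- The six-factorisation problem for the Hirota Lax matrix admits only the
trivial solution. -/
theorem hirota_six_factorisation_unique {R : Type*} [DivisionRing R]
    (x y z r s t x' y' z' r' s' t' : R)
    (hx : x ≠ 0) (hy : y ≠ 0) (hz : z ≠ 0) (hr : r ≠ 0) (hs : s ≠ 0) (ht : t ≠ 0)
    (hx' : x' ≠ 0) (hy' : y' ≠ 0) (hz' : z' ≠ 0) (hr' : r' ≠ 0) (hs' : s' ≠ 0)
    (ht' : t' ≠ 0)
    (h : hirotaL4 2 3 t' * hirotaL4 1 3 s' * hirotaL4 0 3 r' *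
          hirotaL4 1 2 z' * hirotaL4 0 2 y' * hirotaL4 0 1 x'
        = hirotaL4 2 3 t * hirotaL4 1 3 s * hirotaL4 0 3 r *
          hirotaL4 1 2 z * hirotaL4 0 2 y * hirotaL4 0 1 x) :
    x' = x ∧ y' = y ∧ z' = z ∧ r' = r ∧ s' = s ∧ t' = t := by
  rw [hirota_prod, hirota_prod] at h
  have h02 : r' = r := by have := congrFun (congrFun h 0) 2; simpa using this
  have h01 : r' * y' = r * y := by have := congrFun (congrFun h 0) 1; simpa using this
  have h00 : r' * (y' * x') = r * (y * x) := by
    have := congrFun (congrFun h 0) 0; simpa using this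
  have h11 : y' + s' = y + s := by have := congrFun (congrFun h 1) 1; simpa using this
  have h10 : y' * x' + s' * x' + s' * z' = y * x + s * x + s * z := by
    have := congrFun (congrFun h 1) 0; simpa using this
  have h20 : x' + z' + t' = x + z + t := by
    have := congrFun (congrFun h 2) 0; simpa using this
  subst h02
  have hyy : y' = y := mul_left_cancel₀ hr' h01
  subst hyy
  have hxx : x' = x := mul_left_cancel₀ hy' (mul_left_cancel₀ hr' h00)
  subst hxx
  have hss : s' = s := by
    have := add_left_cancel h11; exact this
  subst hss
  have hzz : z' = z := by
    have h10' : s' * z' = s' * z := by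
      have := h10
      rw [add_assoc, add_assoc] at this
      have := add_left_cancel this
      exact add_left_cancel this
    exact mul_left_cancel₀ hs' h10'
  subst hzz
  have htt : t' = t := by
    rw [add_assoc, add_assoc] at h20
    exact add_left_cancel (add_left_cancel h20)
  exact ⟨rfl, rfl, rfl, rfl, rfl, htt⟩
end

section
/- Let R be a division ring, and let T be the noncommutative Hirota map T(x,y,z) = (yx(x+z)⁻¹, x+z, yz(x+z)⁻¹) defined whenever x+z is invertible. Then T satisfies the functional tetrahedron equation: for all x,y,z,r,s,t in R for which all intermediate expressions are defined, T¹²³ ∘ T¹⁴⁵ ∘ T²⁴⁶ ∘ T³⁵⁶ (x,y,z,r,s,t) = T³⁵⁶ ∘ T²⁴⁶ ∘ T¹⁴⁵ ∘ T¹²³ (x,y,z,r,s,t), where T^{ijk} acts as T on the i-th, j-th, k-th coordinates of R⁶ and as identity on the others. -/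
section HirotaTetrahedron

variable {R : Type*} [DivisionRing R]

/-- The noncommutative Hirota map. -/
def hirotaT (p : R × R × R) : R × R × R :=
  match p with
  | (x, y, z) => (y * x * (x + z)⁻¹, x + z, y * z * (x + z)⁻¹)

/-- `T^{ijk}` applications of a map `f : R³ → R³` to the indicated
coordinates of `R⁶`. -/
def app123 (f : R × R × R → R × R × R) (p : R × R × R × R × R × R) :
    R × R × R × R × R × R :=
  match p with
  | (x, y, z, r, s, t) =>
      match f (x, y, z) with
      | (x', y', z') => (x', y', z', r, s, t)

def app145 (f : R × R × R → R × R × R) (p : R × R × R × R × R × R) :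
    R × R × R × R × R × R :=
  match p with
  | (x, y, z, r, s, t) =>
      match f (x, r, s) with
      | (x', r', s') => (x', y, z, r', s', t)

def app246 (f : R × R × R → R × R × R) (p : R × R × R × R × R × R) :
    R × R × R × R × R × R :=
  match p with
  | (x, y, z, r, s, t) =>
      match f (y, r, t) with
      | (y', r', t') => (x, y', z, r', s, t')

def app356 (f : R × R × R → R × R × R) (p : R × R × R × R × R × R) :
    R × R × R × R × R × R :=
  match p with
  | (x, y, z, r, s, t) =>
      match f (z, s, t) with
      | (z', s', t') => (x, y, z', r, s', t')

/-- Coordinate selections. -/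
def sel123 (p : R × R × R × R × R × R) : R × R × R :=
  match p with | (x, y, z, _, _, _) => (x, y, z)
def sel145 (p : R × R × R × R × R × R) : R × R × R :=
  match p with | (x, _, _, r, s, _) => (x, r, s)
def sel246 (p : R × R × R × R × R × R) : R × R × R :=
  match p with | (_, y, _, r, _, t) => (y, r, t)
def sel356 (p : R × R × R × R × R × R) : R × R × R :=
  match p with | (_, _, z, _, s, t) => (z, s, t)

/-- The Hirota map is defined at `(x,y,z)` when `x + z` is invertible. -/
def hirotaDef (p : R × R × R) : Prop :=
  match p with | (x, _, z) => x + z ≠ 0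

/-- The noncommutative Hirota map satisfies the functional tetrahedron equation
wherever all intermediate expressions are defined. -/
theorem hirota_tetrahedron (p : R × R × R × R × R × R)
    (hL1 : hirotaDef (sel356 p))
    (hL2 : hirotaDef (sel246 (app356 hirotaT p)))
    (hL3 : hirotaDef (sel145 (app246 hirotaT (app356 hirotaT p))))
    (hL4 : hirotaDef (sel123 (app145 hirotaT (app246 hirotaT (app356 hirotaT p)))))
    (hR1 : hirotaDef (sel123 p))
    (hR2 : hirotaDef (sel145 (app123 hirotaT p)))
    (hR3 : hirotaDef (sel246 (app145 hirotaT (app123 hirotaT p))))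
    (hR4 : hirotaDef (sel356 (app246 hirotaT (app145 hirotaT (app123 hirotaT p))))) :
    app123 hirotaT (app145 hirotaT (app246 hirotaT (app356 hirotaT p)))
      = app356 hirotaT (app246 hirotaT (app145 hirotaT (app123 hirotaT p))) := by
  obtain ⟨x,y,z,r,s,t⟩ := p
  simp only [app123, app145, app246, app356, sel123, sel145, sel246, sel356, hirotaT,
    hirotaDef] at *
  simp only [← add_assoc] at *
  set A := z + t with hA_def
  set E := x + z with hE_def
  set C := E + t with hC_def
  set B := y + s * t * A⁻¹ with hB_def
  set F := y * x * E⁻¹ + s with hF_def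
  have hA : A ≠ 0 := hL1
  have hB : B ≠ 0 := hL2
  have hC : C ≠ 0 := hR3
  have hE : E ≠ 0 := hR1
  have hF : F ≠ 0 := hR2
  have hCA : C = x + A := by rw [hC_def, hE_def, hA_def, add_assoc]
  -- K = B * A
  have hKA : B * A = y*z + y*t + s*t := by
    rw [hB_def, add_mul, mul_assoc (s*t) A⁻¹ A, inv_mul_cancel₀ hA, mul_one, hA_def]
    noncomm_ring
  -- L = F * E
  have hLE : F * E = y*x + s*x + s*z := by
    rw [hF_def, add_mul, mul_assoc (y*x) E⁻¹ E, inv_mul_cancel₀ hE, mul_one, hE_def]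
    noncomm_ring
  have hKne : y*z + y*t + s*t ≠ 0 := hKA ▸ mul_ne_zero hB hA
  have hLne : y*x + s*x + s*z ≠ 0 := hLE ▸ mul_ne_zero hF hE
  have hKi : A⁻¹ * B⁻¹ = (y*z + y*t + s*t)⁻¹ := by rw [← mul_inv_rev, hKA]
  have hLi : E⁻¹ * F⁻¹ = (y*x + s*x + s*z)⁻¹ := by rw [← mul_inv_rev, hLE]
  have hszA : s*z*A⁻¹ = s - s*t*A⁻¹ := by
    rw [eq_sub_iff_add_eq, ← add_mul, ← mul_add, ← hA_def, mul_inv_cancel_right₀ hA]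
  have hyzE : y*z*E⁻¹ = y - y*x*E⁻¹ := by
    rw [eq_sub_iff_add_eq, ← add_mul, ← mul_add, add_comm z x, ← hE_def,
      mul_inv_cancel_right₀ hE]
  -- D = L * C⁻¹
  have hDC : (B*x*C⁻¹ + s*z*A⁻¹) * C = y*x + s*x + s*z := by
    rw [add_mul, mul_assoc (B*x) C⁻¹ C, inv_mul_cancel₀ hC, mul_one, hCA, mul_add,
      mul_assoc (s*z) A⁻¹ A, inv_mul_cancel₀ hA, mul_one, hszA, hB_def]
    noncomm_ring
  have hD : B*x*C⁻¹ + s*z*A⁻¹ = (y*x + s*x + s*z) * C⁻¹ := by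
    rw [← hDC, mul_inv_cancel_right₀ hC]
  -- H = K * C⁻¹
  have hHC : (y*z*E⁻¹ + F*t*C⁻¹) * C = y*z + y*t + s*t := by
    rw [add_mul, mul_assoc (F*t) C⁻¹ C, inv_mul_cancel₀ hC, mul_one, hC_def, mul_add,
      mul_assoc (y*z) E⁻¹ E, inv_mul_cancel₀ hE, mul_one, hyzE, hF_def]
    noncomm_ring
  have hH : y*z*E⁻¹ + F*t*C⁻¹ = (y*z + y*t + s*t) * C⁻¹ := by
    rw [← hHC, mul_inv_cancel_right₀ hC]
  -- auxiliary identities for the third coordinate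
  have e1 : s*z*A⁻¹*C = y*x + s*x + s*z - B*x := by
    rw [hCA, mul_add, mul_assoc (s*z) A⁻¹ A, inv_mul_cancel₀ hA, mul_one, hszA, hB_def]
    noncomm_ring
  have e2 : y*z*E⁻¹*C = y*z + y*t + s*t - F*t := by
    rw [hC_def, mul_add, mul_assoc (y*z) E⁻¹ E, inv_mul_cancel₀ hE, mul_one, hyzE, hF_def]
    noncomm_ring
  have e3 : y*B⁻¹ = 1 - s*t*(y*z + y*t + s*t)⁻¹ := by
    rw [eq_sub_iff_add_eq, ← hKi, ← mul_assoc (s*t) A⁻¹ B⁻¹, ← add_mul, ← hB_def,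
      mul_inv_cancel₀ hB]
  have e4 : s*F⁻¹ = 1 - y*x*(y*x + s*x + s*z)⁻¹ := by
    rw [eq_sub_iff_add_eq, ← hLi, ← mul_assoc (y*x) E⁻¹ F⁻¹, ← add_mul,
      add_comm s (y*x*E⁻¹), ← hF_def, mul_inv_cancel₀ hF]
  have hLHS3 : r*y*B⁻¹*(s*z*A⁻¹)*(C*(y*x + s*x + s*z)⁻¹)
      = r*(y*B⁻¹) - r*(y*(x*(y*x + s*x + s*z)⁻¹)) := by
    calc r*y*B⁻¹*(s*z*A⁻¹)*(C*(y*x + s*x + s*z)⁻¹)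
        = (r*y)*(B⁻¹*((s*z*A⁻¹*C)*(y*x + s*x + s*z)⁻¹)) := by noncomm_ring
      _ = (r*y)*(B⁻¹*((y*x + s*x + s*z - B*x)*(y*x + s*x + s*z)⁻¹)) := by rw [e1]
      _ = (r*y)*(B⁻¹*(1 - B*(x*(y*x + s*x + s*z)⁻¹))) := by
            rw [sub_mul, mul_inv_cancel₀ hLne, mul_assoc B x ((y*x + s*x + s*z)⁻¹)]
      _ = (r*y)*(B⁻¹ - x*(y*x + s*x + s*z)⁻¹) := by
            rw [mul_sub, mul_one, inv_mul_cancel_left₀ hB]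
      _ = r*(y*B⁻¹) - r*(y*(x*(y*x + s*x + s*z)⁻¹)) := by noncomm_ring
  have hRHS3 : r*s*F⁻¹*(y*z*E⁻¹)*(C*(y*z + y*t + s*t)⁻¹)
      = r*(s*F⁻¹) - r*(s*(t*(y*z + y*t + s*t)⁻¹)) := by
    calc r*s*F⁻¹*(y*z*E⁻¹)*(C*(y*z + y*t + s*t)⁻¹)
        = (r*s)*(F⁻¹*((y*z*E⁻¹*C)*(y*z + y*t + s*t)⁻¹)) := by noncomm_ring
      _ = (r*s)*(F⁻¹*((y*z + y*t + s*t - F*t)*(y*z + y*t + s*t)⁻¹)) := by rw [e2]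
      _ = (r*s)*(F⁻¹*(1 - F*(t*(y*z + y*t + s*t)⁻¹))) := by
            rw [sub_mul, mul_inv_cancel₀ hKne, mul_assoc F t ((y*z + y*t + s*t)⁻¹)]
      _ = (r*s)*(F⁻¹ - t*(y*z + y*t + s*t)⁻¹) := by
            rw [mul_sub, mul_one, inv_mul_cancel_left₀ hF]
      _ = r*(s*F⁻¹) - r*(s*(t*(y*z + y*t + s*t)⁻¹)) := by noncomm_ring
  rw [hD, hH]
  simp only [mul_inv_rev, inv_inv]
  simp only [Prod.mk.injEq]
  refine ⟨?_, ?_, ?_, ?_, ?_, ?_⟩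
  · simp only [mul_assoc, inv_mul_cancel_left₀ hB, inv_mul_cancel_left₀ hC, hLi]
  · rw [← hLE]
  · rw [hLHS3, hRHS3, e3, e4]
    noncomm_ring
  · trivial
  · rw [← hKA]
  · simp only [mul_assoc, inv_mul_cancel_left₀ hF, inv_mul_cancel_left₀ hC, hKi]

end HirotaTetrahedron
end

section
/- Let R be a division ring and x₁,x₂,y₁,y₂,z₁,z₂ invertible elements with x₁,y₁,z₁ additionally assumed such that the map is defined. Suppose two sextuples (x̃₁,x̃₂,ỹ₂,s̃₂,r̃₂,z̃₂,t̃) and (x̂₁,x̂₂,ŷ₂,ŝ₂,r̂₂,ẑ₂,t̂) satisfy (for fixed invertible t₁ ∈ R): z̃₁ = ẑ₁; t₁z̃₁x̃₁ = t₁ẑ₁x̂₁; t₁⁻¹z̃₁x̃₂x̃₁⁻¹ = t₁⁻¹ẑ₁x̂₂x̂₁⁻¹; t₁⁻¹z̃₂z̃₁⁻¹ = t₁⁻¹ẑ₂ẑ₁⁻¹; t₁⁻¹(z̃₂z̃₁⁻¹x̃₂x̃₁⁻¹ + ỹ₂z̃₁⁻¹x̃₁) = t₁⁻¹(ẑ₂ẑ₁⁻¹x̂₂x̂₁⁻¹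 + ŷ₂ẑ₁⁻¹x̂₁). Then x̃₁ = x̂₁, x̃₂ = x̂₂, z̃₂ = ẑ₂, and ỹ₂ = ŷ₂. -/
/-- Part of the six-factorisation uniqueness argument for the mKdV
gauge-transformation Lax matrix: the displayed system forces the two
solutions to coincide. -/
theorem mKdV_six_factorisation_unique {R : Type*} [DivisionRing R]
    (t₁ : R) (ht₁ : t₁ ≠ 0)
    (x₁' x₂' y₂' s₂' r₂' z₁' z₂' t' x₁'' x₂'' y₂'' s₂'' r₂'' z₁'' z₂'' t'' : R)
    (hx₁' : x₁' ≠ 0) (hx₂' : x₂' ≠ 0) (hy₂' : y₂' ≠ 0) (hs₂' : s₂' ≠ 0)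
    (hr₂' : r₂' ≠ 0) (hz₁' : z₁' ≠ 0) (hz₂' : z₂' ≠ 0) (ht' : t' ≠ 0)
    (hx₁'' : x₁'' ≠ 0) (hx₂'' : x₂'' ≠ 0) (hy₂'' : y₂'' ≠ 0) (hs₂'' : s₂'' ≠ 0)
    (hr₂'' : r₂'' ≠ 0) (hz₁'' : z₁'' ≠ 0) (hz₂'' : z₂'' ≠ 0) (ht'' : t'' ≠ 0)
    (e1 : z₁' = z₁'')
    (e2 : t₁ * z₁' * x₁' = t₁ * z₁'' * x₁'')
    (e3 : t₁⁻¹ * z₁' * x₂' * x₁'⁻¹ = t₁⁻¹ * z₁'' * x₂'' * x₁''⁻¹)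
    (e4 : t₁⁻¹ * z₂' * z₁'⁻¹ = t₁⁻¹ * z₂'' * z₁''⁻¹)
    (e5 : t₁⁻¹ * (z₂' * z₁'⁻¹ * x₂' * x₁'⁻¹ + y₂' * z₁'⁻¹ * x₁')
        = t₁⁻¹ * (z₂'' * z₁''⁻¹ * x₂'' * x₁''⁻¹ + y₂'' * z₁''⁻¹ * x₁'')) :
    x₁' = x₁'' ∧ x₂' = x₂'' ∧ z₂' = z₂'' ∧ y₂' = y₂'' := by
  subst e1
  have ht₁' : t₁⁻¹ ≠ 0 := inv_ne_zero ht₁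
  have hX : x₁' = x₁'' := mul_left_cancel₀ (mul_ne_zero ht₁ hz₁'') e2
  subst hX
  have hX2 : x₂' = x₂'' :=
    mul_left_cancel₀ (mul_ne_zero ht₁' hz₁'')
      (mul_right_cancel₀ (inv_ne_zero hx₁') e3)
  subst hX2
  have hZ : z₂' = z₂'' :=
    mul_right_cancel₀ (inv_ne_zero hz₁'')
      (mul_left_cancel₀ ht₁' (by rw [mul_assoc, mul_assoc] at e4; exact e4))
  subst hZ
  have hY : y₂' = y₂'' :=
    mul_right_cancel₀ (inv_ne_zero hz₁'')
      (mul_right_cancel₀ hx₁' (add_left_cancel (mul_left_cancel₀ ht₁' e5)))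
  exact ⟨rfl, rfl, rfl, hY⟩
end
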